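/- For every real θ, the noiseless non-local-magic state v_θ = cos(θ/2) |00⟩ − i·sin(θ/2) |11⟩ ∈ ℂ² ⊗ ℂ² has stabilizer 2-Rényi entropy M₂(v_θ v_θᴴ) = log₂( 8 / (7 + cos(4θ)) ). In particular, at θ = π/2 (the Bell state) the stabilizer entropy vanishes. -/

import Mathlib

/-!
For a state `a|00⟩ + b|11⟩` only eight Pauli strings have a nonzero expectation value:
`II, ZZ` give `|a|² + |b|²`, `IZ, ZI` give `|a|² - |b|²`, and `XX, YY, XY, YX` give `± 2 Re (a b̄)`
or `± 2 Im (a b̄)`. For `v_θ` we have `a b̄ = (i/2) sin θ`, so these are `1`, `cos θ` and `0`, `± sin θ`,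
and the Pauli fourth moment is
`(2 + 2 cos⁴ θ + 2 sin⁴ θ) / 4 = (7 + cos 4θ) / 8`.
-/

noncomputable section
open Matrix Kronecker

/-- The four single-qubit Pauli matrices I, X, Y, Z. -/
def pauli : Fin 4 → Matrix (Fin 2) (Fin 2) ℂ :=
  ![1, !![0, 1; 1, 0], !![0, -Complex.I; Complex.I, 0], !![1, 0; 0, -1]]

/-- Two-qubit Pauli strings σ₁ ⊗ σ₂. -/
def pauli2 (a : Fin 4 × Fin 4) : Matrix (Fin 2 × Fin 2) (Fin 2 × Fin 2) ℂ :=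
  pauli a.1 ⊗ₖ pauli a.2

/-- Rank-one density matrix v vᴴ. -/
def dm {ι : Type*} (v : ι → ℂ) : Matrix ι ι ℂ := Matrix.vecMulVec v (star v)

/-- Stabilizer 2-Rényi entropy of a two-qubit state. -/
def M2two (ψ : Matrix (Fin 2 × Fin 2) (Fin 2 × Fin 2) ℂ) : ℝ :=
  - Real.logb 2 ((1 / 4) * ∑ a : Fin 4 × Fin 4, ‖(pauli2 a * ψ).trace‖ ^ 4)

/-- The non-local-magic state cos(θ/2)|00⟩ − i sin(θ/2)|11⟩. -/
def vtheta (θ : ℝ) : Fin 2 × Fin 2 → ℂ := fun p =>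
  if p = ((0 : Fin 2), (0 : Fin 2)) then (Real.cos (θ / 2) : ℂ)
  else if p = ((1 : Fin 2), (1 : Fin 2)) then -Complex.I * (Real.sin (θ / 2) : ℂ) else 0

lemma norm_pow_four_eq_normSq_sq (z : ℂ) : ‖z‖ ^ 4 = Complex.normSq z ^ 2 := by
  rw [Complex.normSq_eq_norm_sq, ← pow_mul]

def diagState (a b : ℂ) : Fin 2 × Fin 2 → ℂ := fun p =>
  if p = (0, 0) then a else if p = (1, 1) then b else 0

theorem sum_pauli_norm_pow_four_diagState (a b : ℂ) :
    ∑ P : Fin 4 × Fin 4, ‖(pauli2 P * dm (diagState a b)).trace‖ ^ 4 =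
      2 * (Complex.normSq a + Complex.normSq b) ^ 4 + 2 * (Complex.normSq a - Complex.normSq b) ^ 4
        + 32 * ((a * star b).re ^ 4 + (a * star b).im ^ 4) := by
  simp only [norm_pow_four_eq_normSq_sq, pauli2, pauli, dm, diagState, Matrix.trace, Matrix.diag,
    Matrix.mul_apply, Fintype.sum_prod_type, Fin.sum_univ_two, Fin.sum_univ_four,
    Matrix.kroneckerMap_apply, Matrix.vecMulVec_apply, Pi.star_apply,
    Matrix.cons_val_zero, Matrix.cons_val_one, Matrix.one_apply, Matrix.cons_val]
  norm_num [Prod.ext_iff, RCLike.star_def, Complex.normSq_apply, Complex.ext_iff]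
  ring

lemma cos_pow_four_add_sin_pow_four (x : ℝ) :
    Real.cos x ^ 4 + Real.sin x ^ 4 = (3 + Real.cos (4 * x)) / 4 := by
  have h4x : Real.cos (4 * x) = 1 - 2 * Real.sin (2 * x) ^ 2 := by
    rw [show 4 * x = 2 * (2 * x) by ring, Real.cos_two_mul, Real.cos_sq']
    ring
  rw [h4x, Real.sin_two_mul]
  nlinarith [Real.sin_sq_add_cos_sq x]

lemma sum_pauli_norm_pow_four_vtheta (θ : ℝ) :
    ∑ P : Fin 4 × Fin 4, ‖(pauli2 P * dm (vtheta θ)).trace‖ ^ 4 = (7 + Real.cos (4 * θ)) / 2 := by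
  have hv : vtheta θ = diagState (Real.cos (θ / 2)) (-Complex.I * Real.sin (θ / 2)) := rfl
  have hcos : Real.cos (θ / 2) ^ 2 - Real.sin (θ / 2) ^ 2 = Real.cos θ := by
    rw [← Real.cos_two_mul', mul_div_cancel₀ θ two_ne_zero]
  have hsin : Real.cos (θ / 2) * Real.sin (θ / 2) = Real.sin θ / 2 := by
    rw [← mul_div_cancel₀ θ two_ne_zero, Real.sin_two_mul]
    ring_nf
  have hprod : (Real.cos (θ / 2) : ℂ) * star (-Complex.I * Real.sin (θ / 2)) =
      (Real.sin θ / 2 : ℝ) * Complex.I := by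
    rw [← hsin, star_mul', star_neg, Complex.star_def, Complex.conj_I, Complex.conj_ofReal]
    push_cast
    ring
  rw [hv, sum_pauli_norm_pow_four_diagState, hprod, Complex.mul_I_re, Complex.mul_I_im,
    Complex.ofReal_re, Complex.ofReal_im, Complex.normSq_mul, Complex.normSq_neg, Complex.normSq_I,
    Complex.normSq_ofReal, Complex.normSq_ofReal, one_mul, ← sq, ← sq, Real.cos_sq_add_sin_sq, hcos]
  linear_combination (2 : ℝ) * cos_pow_four_add_sin_pow_four θ

theorem M2two_dm_vtheta (θ : ℝ) :
    M2two (dm (vtheta θ)) = Real.logb 2 (8 / (7 + Real.cos (4 * θ))) := by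
  have hpos : 0 < 7 + Real.cos (4 * θ) := by linarith [Real.neg_one_le_cos (4 * θ)]
  rw [M2two, sum_pauli_norm_pow_four_vtheta, ← Real.logb_inv]
  congr 1
  field_simp
  ring

theorem stabilizer_entropy_nlm_state (θ : ℝ) :
    M2two (dm (vtheta θ)) = Real.logb 2 (8 / (7 + Real.cos (4 * θ))) ∧
      M2two (dm (vtheta (Real.pi / 2))) = 0 := by
  refine ⟨M2two_dm_vtheta θ, ?_⟩
  rw [M2two_dm_vtheta, show 4 * (Real.pi / 2) = 2 * Real.pi by ring, Real.cos_two_pi]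
  norm_num
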